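/- Let d be a positive integer with d ≡ 0 (mod 4) and d/4 ≡ 1 or 2 (mod 4), and write d/4 = d₀f² with d₀ squarefree and f odd. Then r₂₄(d) = (1/3) · Σ_{c ∣ f} Σ_{c′ ∣ f, gcd(c,c′)=1} r₃,prim(d/(4c²)) · r₃,prim(d/(4c′²)). Moreover, if d ≡ 0 (mod 4) and d/4 ≡ 0 or 3 (mod 4), then r₂₄(d) = 0. -/

import Mathlib

/-- `r₂₄(n)`: half the number of vectors `(a,b,c,d,e,f) ∈ ℤ⁶` with
`gcd(a,b,c,d,e,f) = 1`, `af − be + cd = 0` and `a²+b²+c²+d²+e²+f² = n`. -/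
noncomputable def r24 (n : ℕ) : ℚ :=
  (Nat.card {w : Fin 6 → ℤ //
    Finset.univ.gcd w = 1 ∧
    w 0 * w 5 - w 1 * w 4 + w 2 * w 3 = 0 ∧
    (w 0) ^ 2 + (w 1) ^ 2 + (w 2) ^ 2 + (w 3) ^ 2 + (w 4) ^ 2 + (w 5) ^ 2 = (n : ℤ)} : ℚ) / 2

/-- `r₃,prim(n)`: the number of triples `(x,y,z) ∈ ℤ³` with `x²+y²+z² = n`
and `gcd(x,y,z) = 1`. -/
noncomputable def r3prim (n : ℕ) : ℕ :=
  Nat.card {v : Fin 3 → ℤ //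
    (v 0) ^ 2 + (v 1) ^ 2 + (v 2) ^ 2 = (n : ℤ) ∧ Finset.univ.gcd v = 1}

open Finset

section Helpers

private lemma gcd_univ_nonneg {k : ℕ} (v : Fin k → ℤ) : 0 ≤ Finset.univ.gcd v := by
  rw [← Finset.normalize_gcd, ← Int.abs_eq_normalize]; exact abs_nonneg _

private lemma nat_card_sigma {ι : Type*} [Fintype ι] (α : ι → Type*) [∀ i, Finite (α i)] :
    Nat.card (Σ i, α i) = ∑ i, Nat.card (α i) := by
  classical
  letI : ∀ i, Fintype (α i) := fun i => Fintype.ofFinite _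
  simp [Nat.card_eq_fintype_card, Fintype.card_sigma]

private lemma sq_mod4 (x : ℤ) : x ^ 2 % 4 = x % 2 := by
  rcases Int.even_or_odd x with ⟨k, rfl⟩ | ⟨k, rfl⟩ <;> ring_nf <;> omega

private lemma norm_parity {m : ℕ} (v : Fin 3 → ℤ)
    (hv : v 0 ^ 2 + v 1 ^ 2 + v 2 ^ 2 = (m : ℤ)) :
    (v 0 % 2 + v 1 % 2 + v 2 % 2) % 4 = (m : ℤ) % 4 := by
  have h0 := sq_mod4 (v 0); have h1 := sq_mod4 (v 1); have h2 := sq_mod4 (v 2)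
  generalize v 0 ^ 2 = a at *
  generalize v 1 ^ 2 = b at *
  generalize v 2 ^ 2 = c at *
  omega

private lemma finite_sphere (m : ℕ) :
    Set.Finite {v : Fin 3 → ℤ | v 0 ^ 2 + v 1 ^ 2 + v 2 ^ 2 = (m : ℤ)} := by
  apply Set.Finite.subset (Set.Finite.pi (fun i : Fin 3 => Set.finite_Icc (-(m : ℤ)) m))
  intro v hv
  have h0 : v 0 ^ 2 + v 1 ^ 2 + v 2 ^ 2 = (m : ℤ) := hv
  intro i _
  simp only [Set.mem_Icc]
  have hi : v i ^ 2 ≤ (m : ℤ) := by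
    fin_cases i
    · show v 0 ^ 2 ≤ (m : ℤ); nlinarith [sq_nonneg (v 1), sq_nonneg (v 2)]
    · show v 1 ^ 2 ≤ (m : ℤ); nlinarith [sq_nonneg (v 0), sq_nonneg (v 2)]
    · show v 2 ^ 2 ≤ (m : ℤ); nlinarith [sq_nonneg (v 0), sq_nonneg (v 1)]
  constructor <;> nlinarith [sq_nonneg (v i + m), sq_nonneg (v i - m), Int.natCast_nonneg m]

private lemma dvd_of_sq_dvd {d₀ f c : ℕ} (hsf : Squarefree d₀) (hf : f ≠ 0) (hc : c ≠ 0)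
    (h : c ^ 2 ∣ d₀ * f ^ 2) : c ∣ f := by
  have hd0 : d₀ ≠ 0 := hsf.ne_zero
  rw [← Nat.factorization_le_iff_dvd hc hf]
  have h2 := (Nat.factorization_le_iff_dvd (pow_ne_zero 2 hc)
      (mul_ne_zero hd0 (pow_ne_zero 2 hf))).mpr h
  intro p
  have h3 := h2 p
  simp only [Nat.factorization_mul hd0 (pow_ne_zero 2 hf), Nat.factorization_pow,
    Finsupp.coe_add, Finsupp.coe_smul, Pi.add_apply, Pi.smul_apply, smul_eq_mul] at h3
  have := (Nat.squarefree_iff_factorization_le_one hd0).mp hsf p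
  omega

private lemma even_of_norm0 {d : ℕ} (h4 : d % 4 = 0) {x y z : ℤ} (h : x^2+y^2+z^2 = (d:ℤ)) :
    x % 2 = 0 ∧ y % 2 = 0 ∧ z % 2 = 0 := by
  have h0 := sq_mod4 x; have h1 := sq_mod4 y; have h2 := sq_mod4 z
  generalize x ^ 2 = a at *; generalize y ^ 2 = b at *; generalize z ^ 2 = c at *
  omega

private lemma odd_of_norm3 {n : ℕ} (h4 : n % 4 = 3) {x y z : ℤ} (h : x^2+y^2+z^2 = (n:ℤ)) :
    x % 2 = 1 ∧ y % 2 = 1 ∧ z % 2 = 1 := by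
  have h0 := sq_mod4 x; have h1 := sq_mod4 y; have h2 := sq_mod4 z
  generalize x ^ 2 = a at *; generalize y ^ 2 = b at *; generalize z ^ 2 = c at *
  omega

end Helpers

section Defs

def WT (d : ℕ) := {w : Fin 6 → ℤ //
    Finset.univ.gcd w = 1 ∧
    w 0 * w 5 - w 1 * w 4 + w 2 * w 3 = 0 ∧
    (w 0) ^ 2 + (w 1) ^ 2 + (w 2) ^ 2 + (w 3) ^ 2 + (w 4) ^ 2 + (w 5) ^ 2 = (d : ℤ)}

def PairT (n : ℕ) := {p : (Fin 3 → ℤ) × (Fin 3 → ℤ) //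
  (p.1 0 ^ 2 + p.1 1 ^ 2 + p.1 2 ^ 2 = (n : ℤ)) ∧
  (p.2 0 ^ 2 + p.2 1 ^ 2 + p.2 2 ^ 2 = (n : ℤ)) ∧
  Int.gcd (Finset.univ.gcd p.1) (Finset.univ.gcd p.2) = 1 ∧
  ∃ i, ¬ (2:ℤ) ∣ (p.1 i + p.2 i)}

def P3T (m : ℕ) := {v : Fin 3 → ℤ //
  (v 0) ^ 2 + (v 1) ^ 2 + (v 2) ^ 2 = (m : ℤ) ∧ Finset.univ.gcd v = 1}

def PPT (m₁ m₂ : ℕ) := {p : (Fin 3 → ℤ) × (Fin 3 → ℤ) //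
  (p.1 0 ^ 2 + p.1 1 ^ 2 + p.1 2 ^ 2 = (m₁ : ℤ)) ∧
  (p.2 0 ^ 2 + p.2 1 ^ 2 + p.2 2 ^ 2 = (m₂ : ℤ)) ∧
  Finset.univ.gcd p.1 = 1 ∧ Finset.univ.gcd p.2 = 1 ∧
  ∃ i, ¬ (2:ℤ) ∣ (p.1 i + p.2 i)}

def SameT (m₁ m₂ : ℕ) := {p : (Fin 3 → ℤ) × (Fin 3 → ℤ) //
  (p.1 0 ^ 2 + p.1 1 ^ 2 + p.1 2 ^ 2 = (m₁ : ℤ)) ∧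
  (p.2 0 ^ 2 + p.2 1 ^ 2 + p.2 2 ^ 2 = (m₂ : ℤ)) ∧
  Finset.univ.gcd p.1 = 1 ∧ Finset.univ.gcd p.2 = 1 ∧
  ∀ i, (2:ℤ) ∣ (p.1 i + p.2 i)}

def sphS (m : ℕ) : Set (Fin 3 → ℤ) := {v | v 0 ^ 2 + v 1 ^ 2 + v 2 ^ 2 = (m : ℤ)}

instance sphS_finite (m : ℕ) : Finite (sphS m) := (finite_sphere m).to_subtype

instance P3T_finite (m : ℕ) : Finite (P3T m) := by
  have h : Set.Finite {v : Fin 3 → ℤ |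
      (v 0) ^ 2 + (v 1) ^ 2 + (v 2) ^ 2 = (m : ℤ) ∧ Finset.univ.gcd v = 1} :=
    (finite_sphere m).subset (fun v hv => hv.1)
  exact h.to_subtype

instance PairT_finite (n : ℕ) : Finite (PairT n) := by
  apply Finite.of_injective (f := fun x : PairT n =>
    ((⟨x.1.1, x.2.1⟩ : sphS n), (⟨x.1.2, x.2.2.1⟩ : sphS n)))
  intro x y h
  obtain ⟨h1, h2⟩ := Prod.mk.injEq .. ▸ h
  exact Subtype.ext (Prod.ext (congrArg Subtype.val h1) (congrArg Subtype.val h2))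

instance PPT_finite (m₁ m₂ : ℕ) : Finite (PPT m₁ m₂) := by
  apply Finite.of_injective (f := fun x : PPT m₁ m₂ =>
    ((⟨x.1.1, x.2.1⟩ : sphS m₁), (⟨x.1.2, x.2.2.1⟩ : sphS m₂)))
  intro x y h
  obtain ⟨h1, h2⟩ := Prod.mk.injEq .. ▸ h
  exact Subtype.ext (Prod.ext (congrArg Subtype.val h1) (congrArg Subtype.val h2))

instance SameT_finite (m₁ m₂ : ℕ) : Finite (SameT m₁ m₂) := by
  apply Finite.of_injective (f := fun x : SameT m₁ m₂ =>
    ((⟨x.1.1, x.2.1⟩ : sphS m₁), (⟨x.1.2, x.2.2.1⟩ : sphS m₂)))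
  intro x y h
  obtain ⟨h1, h2⟩ := Prod.mk.injEq .. ▸ h
  exact Subtype.ext (Prod.ext (congrArg Subtype.val h1) (congrArg Subtype.val h2))

def mkW (σ τ : Fin 3 → ℤ) : Fin 6 → ℤ := fun j => match j with
  | 0 => σ 0 + τ 0 | 1 => σ 1 + τ 1 | 2 => σ 2 + τ 2
  | 3 => σ 2 - τ 2 | 4 => τ 1 - σ 1 | 5 => σ 0 - τ 0

end Defs

section StepA

lemma card_WT_eq (d : ℕ) (h4 : d % 4 = 0) : Nat.card (WT d) = Nat.card (PairT (d/4)) := by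
  have hd : (d : ℤ) = 4 * ((d / 4 : ℕ) : ℤ) := by omega
  refine (Nat.card_eq_of_bijective (fun x : PairT (d/4) => ?_) ⟨?_, ?_⟩).symm
  · -- the map
    refine ⟨mkW x.1.1 x.1.2, ?_, ?_, ?_⟩
    · -- gcd = 1
      obtain ⟨p, hσ, hτ, hg, hpar⟩ := x
      set σ := p.1; set τ := p.2
      set g := Finset.univ.gcd (mkW σ τ) with hgdef
      have hdvd : ∀ j, g ∣ mkW σ τ j := fun j => Finset.gcd_dvd (mem_univ j)
      have h2σ0 : g ∣ 2 * σ 0 := by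
        have e : 2 * σ 0 = mkW σ τ 0 + mkW σ τ 5 := by show 2*σ 0 = (σ 0+τ 0)+(σ 0-τ 0); ring
        rw [e]; exact dvd_add (hdvd 0) (hdvd 5)
      have h2τ0 : g ∣ 2 * τ 0 := by
        have e : 2 * τ 0 = mkW σ τ 0 - mkW σ τ 5 := by show 2*τ 0 = (σ 0+τ 0)-(σ 0-τ 0); ring
        rw [e]; exact dvd_sub (hdvd 0) (hdvd 5)
      have h2σ1 : g ∣ 2 * σ 1 := by
        have e : 2 * σ 1 = mkW σ τ 1 - mkW σ τ 4 := by show 2*σ 1 = (σ 1+τ 1)-(τ 1-σ 1); ring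
        rw [e]; exact dvd_sub (hdvd 1) (hdvd 4)
      have h2τ1 : g ∣ 2 * τ 1 := by
        have e : 2 * τ 1 = mkW σ τ 1 + mkW σ τ 4 := by show 2*τ 1 = (σ 1+τ 1)+(τ 1-σ 1); ring
        rw [e]; exact dvd_add (hdvd 1) (hdvd 4)
      have h2σ2 : g ∣ 2 * σ 2 := by
        have e : 2 * σ 2 = mkW σ τ 2 + mkW σ τ 3 := by show 2*σ 2 = (σ 2+τ 2)+(σ 2-τ 2); ring
        rw [e]; exact dvd_add (hdvd 2) (hdvd 3)
      have h2τ2 : g ∣ 2 * τ 2 := by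
        have e : 2 * τ 2 = mkW σ τ 2 - mkW σ τ 3 := by show 2*τ 2 = (σ 2+τ 2)-(σ 2-τ 2); ring
        rw [e]; exact dvd_sub (hdvd 2) (hdvd 3)
      have hodd : ¬ (2:ℤ) ∣ g := by
        obtain ⟨i, hi⟩ := hpar
        intro h2
        apply hi
        fin_cases i
        · exact h2.trans (hdvd 0)
        · exact h2.trans (hdvd 1)
        · exact h2.trans (hdvd 2)
      have hcop : IsCoprime g (2:ℤ) := ((Int.prime_two.coprime_iff_not_dvd).mpr hodd).symm
      have hσ' : ∀ i, g ∣ σ i := by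
        intro i; fin_cases i
        · exact hcop.dvd_of_dvd_mul_left (by rw [mul_comm] at h2σ0 ⊢; exact h2σ0)
        · exact hcop.dvd_of_dvd_mul_left (by rw [mul_comm] at h2σ1 ⊢; exact h2σ1)
        · exact hcop.dvd_of_dvd_mul_left (by rw [mul_comm] at h2σ2 ⊢; exact h2σ2)
      have hτ' : ∀ i, g ∣ τ i := by
        intro i; fin_cases i
        · exact hcop.dvd_of_dvd_mul_left (by rw [mul_comm] at h2τ0 ⊢; exact h2τ0)
        · exact hcop.dvd_of_dvd_mul_left (by rw [mul_comm] at h2τ1 ⊢; exact h2τ1)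
        · exact hcop.dvd_of_dvd_mul_left (by rw [mul_comm] at h2τ2 ⊢; exact h2τ2)
      have hg1 : g ∣ 1 := by
        have d1 : g ∣ Finset.univ.gcd σ := Finset.dvd_gcd (fun i _ => hσ' i)
        have d2 : g ∣ Finset.univ.gcd τ := Finset.dvd_gcd (fun i _ => hτ' i)
        have := Int.dvd_coe_gcd d1 d2
        rw [hg] at this
        simpa only [Nat.cast_one] using this
      exact Int.eq_one_of_dvd_one (gcd_univ_nonneg _) hg1
    · -- plücker
      obtain ⟨p, hσ, hτ, hg, hpar⟩ := x
      show (p.1 0 + p.2 0) * (p.1 0 - p.2 0) - (p.1 1 + p.2 1) * (p.2 1 - p.1 1)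
        + (p.1 2 + p.2 2) * (p.1 2 - p.2 2) = 0
      linear_combination hσ - hτ
    · -- norm
      obtain ⟨p, hσ, hτ, hg, hpar⟩ := x
      show (p.1 0 + p.2 0)^2 + (p.1 1 + p.2 1)^2 + (p.1 2 + p.2 2)^2
        + (p.1 2 - p.2 2)^2 + (p.2 1 - p.1 1)^2 + (p.1 0 - p.2 0)^2 = (d:ℤ)
      rw [hd]; linear_combination 2*hσ + 2*hτ
  · -- injective
    intro x y h
    have hv := congrArg Subtype.val h
    have e0 : x.1.1 0 + x.1.2 0 = y.1.1 0 + y.1.2 0 := congrFun hv 0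
    have e1 : x.1.1 1 + x.1.2 1 = y.1.1 1 + y.1.2 1 := congrFun hv 1
    have e2 : x.1.1 2 + x.1.2 2 = y.1.1 2 + y.1.2 2 := congrFun hv 2
    have e3 : x.1.1 2 - x.1.2 2 = y.1.1 2 - y.1.2 2 := congrFun hv 3
    have e4 : x.1.2 1 - x.1.1 1 = y.1.2 1 - y.1.1 1 := congrFun hv 4
    have e5 : x.1.1 0 - x.1.2 0 = y.1.1 0 - y.1.2 0 := congrFun hv 5
    apply Subtype.ext
    apply Prod.ext <;> funext i <;> fin_cases i
    · show x.1.1 0 = y.1.1 0; linarith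
    · show x.1.1 1 = y.1.1 1; linarith
    · show x.1.1 2 = y.1.1 2; linarith
    · show x.1.2 0 = y.1.2 0; linarith
    · show x.1.2 1 = y.1.2 1; linarith
    · show x.1.2 2 = y.1.2 2; linarith
  · -- surjective
    rintro ⟨w, hgw, hq, hn⟩
    have hs : (w 0 + w 5)^2 + (w 1 - w 4)^2 + (w 2 + w 3)^2 = ((d:ℕ) : ℤ) := by
      linear_combination hn + 2*hq
    have ht : (w 0 - w 5)^2 + (w 1 + w 4)^2 + (w 2 - w 3)^2 = ((d:ℕ) : ℤ) := by
      linear_combination hn - 2*hq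
    obtain ⟨es0, es1, es2⟩ := even_of_norm0 h4 hs
    obtain ⟨et0, et1, et2⟩ := even_of_norm0 h4 ht
    set σ : Fin 3 → ℤ := fun i => match i with
      | 0 => (w 0 + w 5)/2 | 1 => (w 1 - w 4)/2 | 2 => (w 2 + w 3)/2 with hσdef
    set τ : Fin 3 → ℤ := fun i => match i with
      | 0 => (w 0 - w 5)/2 | 1 => (w 1 + w 4)/2 | 2 => (w 2 - w 3)/2 with hτdef
    have f0 : 2 * σ 0 = w 0 + w 5 := Int.mul_ediv_cancel' (by omega)
    have f1 : 2 * σ 1 = w 1 - w 4 := Int.mul_ediv_cancel' (by omega)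
    have f2 : 2 * σ 2 = w 2 + w 3 := Int.mul_ediv_cancel' (by omega)
    have g0 : 2 * τ 0 = w 0 - w 5 := Int.mul_ediv_cancel' (by omega)
    have g1 : 2 * τ 1 = w 1 + w 4 := Int.mul_ediv_cancel' (by omega)
    have g2 : 2 * τ 2 = w 2 - w 3 := Int.mul_ediv_cancel' (by omega)
    have hσn : σ 0 ^2 + σ 1 ^2 + σ 2 ^2 = ((d/4 : ℕ) : ℤ) := by
      have h4' : 4 * (σ 0 ^2 + σ 1 ^2 + σ 2 ^2) = 4 * ((d/4 : ℕ) : ℤ) := by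
        have : (2*σ 0)^2 + (2*σ 1)^2 + (2*σ 2)^2 = ((d:ℕ):ℤ) := by
          rw [f0, f1, f2]; exact hs
        rw [hd] at this; linarith
      linarith
    have hτn : τ 0 ^2 + τ 1 ^2 + τ 2 ^2 = ((d/4 : ℕ) : ℤ) := by
      have h4' : 4 * (τ 0 ^2 + τ 1 ^2 + τ 2 ^2) = 4 * ((d/4 : ℕ) : ℤ) := by
        have : (2*τ 0)^2 + (2*τ 1)^2 + (2*τ 2)^2 = ((d:ℕ):ℤ) := by
          rw [g0, g1, g2]; exact ht
        rw [hd] at this; linarith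
      linarith
    have hgg : Int.gcd (Finset.univ.gcd σ) (Finset.univ.gcd τ) = 1 := by
      set G : ℤ := (Int.gcd (Finset.univ.gcd σ) (Finset.univ.gcd τ) : ℤ) with hGdef
      have dσ : ∀ i, G ∣ σ i := fun i =>
        (Int.gcd_dvd_left ..).trans (Finset.gcd_dvd (mem_univ i))
      have dτ : ∀ i, G ∣ τ i := fun i =>
        (Int.gcd_dvd_right ..).trans (Finset.gcd_dvd (mem_univ i))
      have hdw : ∀ j, G ∣ w j := by
        intro j
        fin_cases j
        · show G ∣ w 0
          have : w 0 = σ 0 + τ 0 := by omega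
          rw [this]; exact dvd_add (dσ 0) (dτ 0)
        · show G ∣ w 1
          have : w 1 = σ 1 + τ 1 := by omega
          rw [this]; exact dvd_add (dσ 1) (dτ 1)
        · show G ∣ w 2
          have : w 2 = σ 2 + τ 2 := by omega
          rw [this]; exact dvd_add (dσ 2) (dτ 2)
        · show G ∣ w 3
          have : w 3 = σ 2 - τ 2 := by omega
          rw [this]; exact dvd_sub (dσ 2) (dτ 2)
        · show G ∣ w 4
          have : w 4 = τ 1 - σ 1 := by omega
          rw [this]; exact dvd_sub (dτ 1) (dσ 1)
        · show G ∣ w 5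
          have : w 5 = σ 0 - τ 0 := by omega
          rw [this]; exact dvd_sub (dσ 0) (dτ 0)
      have : G ∣ 1 := by
        have := Finset.dvd_gcd (fun j (_ : j ∈ Finset.univ) => hdw j)
        rw [hgw] at this; exact this
      have h1 : G = 1 := Int.eq_one_of_dvd_one (by positivity) this
      rw [hGdef] at h1
      exact_mod_cast h1
    have hpar : ∃ i, ¬ (2:ℤ) ∣ (σ i + τ i) := by
      by_contra hall
      push_neg at hall
      have h2w : (2:ℤ) ∣ Finset.univ.gcd w := by
        apply Finset.dvd_gcd
        intro j _
        have a0 := hall 0; have a1 := hall 1; have a2 := hall 2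
        fin_cases j
        · show (2:ℤ) ∣ w 0; omega
        · show (2:ℤ) ∣ w 1; omega
        · show (2:ℤ) ∣ w 2; omega
        · show (2:ℤ) ∣ w 3; omega
        · show (2:ℤ) ∣ w 4; omega
        · show (2:ℤ) ∣ w 5; omega
      rw [hgw] at h2w; norm_num at h2w
    refine ⟨⟨(σ, τ), hσn, hτn, hgg, hpar⟩, ?_⟩
    apply Subtype.ext
    funext j
    fin_cases j
    · show σ 0 + τ 0 = w 0; omega
    · show σ 1 + τ 1 = w 1; omega
    · show σ 2 + τ 2 = w 2; omega
    · show σ 2 - τ 2 = w 3; omega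
    · show τ 1 - σ 1 = w 4; omega
    · show σ 0 - τ 0 = w 5; omega

end StepA

section Pattern

def pat (v : Fin 3 → ℤ) : Fin 3 :=
  if v 0 % 2 = v 1 % 2 then 2 else if v 0 % 2 = v 2 % 2 then 1 else 0

set_option maxHeartbeats 1000000 in
lemma same_parity_iff_pat {m₁ m₂ : ℕ} (h12 : m₁ % 4 = m₂ % 4)
    {u v : Fin 3 → ℤ} (hu : u 0 ^ 2 + u 1 ^ 2 + u 2 ^ 2 = (m₁ : ℤ))
    (hv : v 0 ^ 2 + v 1 ^ 2 + v 2 ^ 2 = (m₂ : ℤ)) :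
    (∀ i, (2:ℤ) ∣ (u i + v i)) ↔ pat u = pat v := by
  have pu := norm_parity u hu
  have pv := norm_parity v hv
  clear hu hv
  constructor
  · intro h
    have h0 := h 0; have h1 := h 1; have h2 := h 2
    clear h
    unfold pat
    split_ifs with a b c d <;> first | rfl | (exfalso; omega)
  · intro h
    unfold pat at h
    have key : (2:ℤ) ∣ (u 0 + v 0) ∧ (2:ℤ) ∣ (u 1 + v 1) ∧ (2:ℤ) ∣ (u 2 + v 2) := by
      split_ifs at h with a b c d <;> refine ⟨?_, ?_, ?_⟩ <;> omega
    intro i; fin_cases i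
    · exact key.1
    · exact key.2.1
    · exact key.2.2

def patFib (m : ℕ) (i : Fin 3) := {v : P3T m // pat v.1 = i}

instance patFib_finite (m : ℕ) (i : Fin 3) : Finite (patFib m i) := Subtype.finite

def sw01 (v : Fin 3 → ℤ) : Fin 3 → ℤ := fun i => match i with | 0 => v 1 | 1 => v 0 | 2 => v 2
def sw12 (v : Fin 3 → ℤ) : Fin 3 → ℤ := fun i => match i with | 0 => v 0 | 1 => v 2 | 2 => v 1

@[simp] lemma sw01_0 (v : Fin 3 → ℤ) : sw01 v 0 = v 1 := rfl
@[simp] lemma sw01_1 (v : Fin 3 → ℤ) : sw01 v 1 = v 0 := rfl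
@[simp] lemma sw01_2 (v : Fin 3 → ℤ) : sw01 v 2 = v 2 := rfl
@[simp] lemma sw12_0 (v : Fin 3 → ℤ) : sw12 v 0 = v 0 := rfl
@[simp] lemma sw12_1 (v : Fin 3 → ℤ) : sw12 v 1 = v 2 := rfl
@[simp] lemma sw12_2 (v : Fin 3 → ℤ) : sw12 v 2 = v 1 := rfl

lemma pat_sw01 (v : Fin 3 → ℤ) :
    (pat v = 0 → pat (sw01 v) = 1) ∧ (pat v = 1 → pat (sw01 v) = 0) := by
  unfold pat
  simp only [sw01_0, sw01_1, sw01_2]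
  rcases Int.emod_two_eq_zero_or_one (v 0) with h0 | h0 <;> rcases Int.emod_two_eq_zero_or_one (v 1) with h1 | h1 <;>
    rcases Int.emod_two_eq_zero_or_one (v 2) with h2 | h2 <;> simp only [h0, h1, h2] <;> decide

lemma pat_sw12 (v : Fin 3 → ℤ) (hnc : ¬(v 0 % 2 = v 1 % 2 ∧ v 1 % 2 = v 2 % 2)) :
    (pat v = 1 → pat (sw12 v) = 2) ∧ (pat v = 2 → pat (sw12 v) = 1) := by
  unfold pat
  simp only [sw12_0, sw12_1, sw12_2]
  rcases Int.emod_two_eq_zero_or_one (v 0) with h0 | h0 <;> rcases Int.emod_two_eq_zero_or_one (v 1) with h1 | h1 <;>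
    rcases Int.emod_two_eq_zero_or_one (v 2) with h2 | h2 <;> simp only [h0, h1, h2] at hnc ⊢ <;> revert hnc <;> decide

lemma sw01_sw01 (v : Fin 3 → ℤ) : sw01 (sw01 v) = v := by
  funext i; fin_cases i <;> rfl
lemma sw12_sw12 (v : Fin 3 → ℤ) : sw12 (sw12 v) = v := by
  funext i; fin_cases i <;> rfl

lemma P3T_mem_sw01 {m : ℕ} {v : Fin 3 → ℤ}
    (h : (v 0) ^ 2 + (v 1) ^ 2 + (v 2) ^ 2 = (m : ℤ) ∧ Finset.univ.gcd v = 1) :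
    (sw01 v 0) ^ 2 + (sw01 v 1) ^ 2 + (sw01 v 2) ^ 2 = (m : ℤ) ∧
      Finset.univ.gcd (sw01 v) = 1 := by
  constructor
  · simp only [sw01_0, sw01_1, sw01_2]; linarith [h.1]
  · have h2 : Finset.univ.gcd (sw01 v) = Finset.univ.gcd v := by
      refine Int.dvd_antisymm (gcd_univ_nonneg _) (gcd_univ_nonneg _) ?_ ?_
      · apply Finset.dvd_gcd; intro j _
        fin_cases j
        · show Finset.univ.gcd (sw01 v) ∣ v 0
          exact (sw01_1 v) ▸ Finset.gcd_dvd (mem_univ 1)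
        · show Finset.univ.gcd (sw01 v) ∣ v 1
          exact (sw01_0 v) ▸ Finset.gcd_dvd (mem_univ 0)
        · show Finset.univ.gcd (sw01 v) ∣ v 2
          exact (sw01_2 v) ▸ Finset.gcd_dvd (mem_univ 2)
      · apply Finset.dvd_gcd; intro j _
        fin_cases j
        · show Finset.univ.gcd v ∣ sw01 v 0
          rw [sw01_0]; exact Finset.gcd_dvd (mem_univ 1)
        · show Finset.univ.gcd v ∣ sw01 v 1
          rw [sw01_1]; exact Finset.gcd_dvd (mem_univ 0)
        · show Finset.univ.gcd v ∣ sw01 v 2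
          rw [sw01_2]; exact Finset.gcd_dvd (mem_univ 2)
    rw [h2]; exact h.2

lemma P3T_mem_sw12 {m : ℕ} {v : Fin 3 → ℤ}
    (h : (v 0) ^ 2 + (v 1) ^ 2 + (v 2) ^ 2 = (m : ℤ) ∧ Finset.univ.gcd v = 1) :
    (sw12 v 0) ^ 2 + (sw12 v 1) ^ 2 + (sw12 v 2) ^ 2 = (m : ℤ) ∧
      Finset.univ.gcd (sw12 v) = 1 := by
  constructor
  · simp only [sw12_0, sw12_1, sw12_2]; linarith [h.1]
  · have h2 : Finset.univ.gcd (sw12 v) = Finset.univ.gcd v := by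
      refine Int.dvd_antisymm (gcd_univ_nonneg _) (gcd_univ_nonneg _) ?_ ?_
      · apply Finset.dvd_gcd; intro j _
        fin_cases j
        · show Finset.univ.gcd (sw12 v) ∣ v 0
          exact (sw12_0 v) ▸ Finset.gcd_dvd (mem_univ 0)
        · show Finset.univ.gcd (sw12 v) ∣ v 1
          exact (sw12_2 v) ▸ Finset.gcd_dvd (mem_univ 2)
        · show Finset.univ.gcd (sw12 v) ∣ v 2
          exact (sw12_1 v) ▸ Finset.gcd_dvd (mem_univ 1)
      · apply Finset.dvd_gcd; intro j _
        fin_cases j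
        · show Finset.univ.gcd v ∣ sw12 v 0
          rw [sw12_0]; exact Finset.gcd_dvd (mem_univ 0)
        · show Finset.univ.gcd v ∣ sw12 v 1
          rw [sw12_1]; exact Finset.gcd_dvd (mem_univ 2)
        · show Finset.univ.gcd v ∣ sw12 v 2
          rw [sw12_2]; exact Finset.gcd_dvd (mem_univ 1)
    rw [h2]; exact h.2

def e01 (m : ℕ) : patFib m 0 ≃ patFib m 1 where
  toFun x := ⟨⟨sw01 x.1.1, P3T_mem_sw01 x.1.2⟩, (pat_sw01 x.1.1).1 x.2⟩
  invFun x := ⟨⟨sw01 x.1.1, P3T_mem_sw01 x.1.2⟩, (pat_sw01 x.1.1).2 x.2⟩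
  left_inv x := by
    apply Subtype.ext; apply Subtype.ext; exact sw01_sw01 x.1.1
  right_inv x := by
    apply Subtype.ext; apply Subtype.ext; exact sw01_sw01 x.1.1

def e12 (m : ℕ) (hm : m % 4 = 1 ∨ m % 4 = 2) : patFib m 1 ≃ patFib m 2 where
  toFun x := ⟨⟨sw12 x.1.1, P3T_mem_sw12 x.1.2⟩,
    (pat_sw12 x.1.1 (by have := norm_parity x.1.1 x.1.2.1; omega)).1 x.2⟩
  invFun x := ⟨⟨sw12 x.1.1, P3T_mem_sw12 x.1.2⟩,
    (pat_sw12 x.1.1 (by have := norm_parity x.1.1 x.1.2.1; omega)).2 x.2⟩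
  left_inv x := by
    apply Subtype.ext; apply Subtype.ext; exact sw12_sw12 x.1.1
  right_inv x := by
    apply Subtype.ext; apply Subtype.ext; exact sw12_sw12 x.1.1

lemma card_P3T_eq_sum (m : ℕ) :
    Nat.card (P3T m) = ∑ i : Fin 3, Nat.card (patFib m i) := by
  rw [← nat_card_sigma]
  exact (Nat.card_congr (Equiv.sigmaFiberEquiv (fun v : P3T m => pat v.1))).symm

lemma card_SameT_eq_sum (m₁ m₂ : ℕ) (h12 : m₁ % 4 = m₂ % 4) :
    Nat.card (SameT m₁ m₂) = ∑ i : Fin 3, Nat.card (patFib m₁ i) * Nat.card (patFib m₂ i) := by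
  have := Nat.card_eq_of_bijective
    (f := fun x : (Σ i : Fin 3, patFib m₁ i × patFib m₂ i) =>
      (⟨(x.2.1.1.1, x.2.2.1.1), x.2.1.1.2.1, x.2.2.1.2.1, x.2.1.1.2.2, x.2.2.1.2.2,
        (same_parity_iff_pat h12 x.2.1.1.2.1 x.2.2.1.2.1).mpr
          (x.2.1.2.trans x.2.2.2.symm)⟩ : SameT m₁ m₂))
    ?_
  · have h' : Nat.card (SameT m₁ m₂) = Nat.card (Σ i : Fin 3, patFib m₁ i × patFib m₂ i) :=
      this.symm
    rw [h', nat_card_sigma]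
    congr 1
    funext i
    exact Nat.card_prod _ _
  constructor
  · rintro ⟨i, u, v⟩ ⟨j, u', v'⟩ h
    have hp := congrArg Subtype.val h
    have h1 : u.1.1 = u'.1.1 := congrArg Prod.fst hp
    have h2 : v.1.1 = v'.1.1 := congrArg Prod.snd hp
    have hij : i = j := by rw [← u.2, ← u'.2, h1]
    subst hij
    have hu : u = u' := Subtype.ext (Subtype.ext h1)
    have hv : v = v' := Subtype.ext (Subtype.ext h2)
    rw [hu, hv]
  · rintro ⟨p, hn1, hn2, hg1, hg2, hpar⟩
    refine ⟨⟨pat p.1, ⟨⟨p.1, hn1, hg1⟩, rfl⟩,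
      ⟨⟨p.2, hn2, hg2⟩, ((same_parity_iff_pat h12 hn1 hn2).mp hpar).symm⟩⟩, ?_⟩
    apply Subtype.ext
    exact Prod.mk.eta

lemma card_split (m₁ m₂ : ℕ) :
    Nat.card (P3T m₁) * Nat.card (P3T m₂)
      = Nat.card (PPT m₁ m₂) + Nat.card (SameT m₁ m₂) := by
  classical
  rw [← Nat.card_prod, ← Nat.card_sum]
  refine (Nat.card_eq_of_bijective
    (f := fun x : PPT m₁ m₂ ⊕ SameT m₁ m₂ => match x with
      | Sum.inl y => ((⟨y.1.1, y.2.1, y.2.2.2.1⟩ : P3T m₁), (⟨y.1.2, y.2.2.1, y.2.2.2.2.1⟩ : P3T m₂))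
      | Sum.inr y => ((⟨y.1.1, y.2.1, y.2.2.2.1⟩ : P3T m₁), (⟨y.1.2, y.2.2.1, y.2.2.2.2.1⟩ : P3T m₂)))
    ⟨?_, ?_⟩).symm
  · rintro (x | x) (y | y) h
    · have h1 : x.1.1 = y.1.1 := congrArg Subtype.val (congrArg Prod.fst h)
      have h2 : x.1.2 = y.1.2 := congrArg Subtype.val (congrArg Prod.snd h)
      congr 1
      exact Subtype.ext (Prod.ext h1 h2)
    · exfalso
      have h1 : x.1.1 = y.1.1 := congrArg Subtype.val (congrArg Prod.fst h)
      have h2 : x.1.2 = y.1.2 := congrArg Subtype.val (congrArg Prod.snd h)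
      obtain ⟨i, hi⟩ := x.2.2.2.2.2
      exact hi (h1 ▸ h2 ▸ y.2.2.2.2.2 i)
    · exfalso
      have h1 : x.1.1 = y.1.1 := congrArg Subtype.val (congrArg Prod.fst h)
      have h2 : x.1.2 = y.1.2 := congrArg Subtype.val (congrArg Prod.snd h)
      obtain ⟨i, hi⟩ := y.2.2.2.2.2
      exact hi (h1 ▸ h2 ▸ x.2.2.2.2.2 i)
    · have h1 : x.1.1 = y.1.1 := congrArg Subtype.val (congrArg Prod.fst h)
      have h2 : x.1.2 = y.1.2 := congrArg Subtype.val (congrArg Prod.snd h)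
      congr 1
      exact Subtype.ext (Prod.ext h1 h2)
  · rintro ⟨u, v⟩
    by_cases hh : ∃ i, ¬ (2:ℤ) ∣ (u.1 i + v.1 i)
    · exact ⟨Sum.inl ⟨(u.1, v.1), u.2.1, v.2.1, u.2.2, v.2.2, hh⟩, rfl⟩
    · push_neg at hh
      exact ⟨Sum.inr ⟨(u.1, v.1), u.2.1, v.2.1, u.2.2, v.2.2, hh⟩, rfl⟩

lemma three_mul_card_PPT (m₁ m₂ : ℕ) (hm : m₁ % 4 = 1 ∨ m₁ % 4 = 2) (h12 : m₁ % 4 = m₂ % 4) :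
    3 * Nat.card (PPT m₁ m₂) = 2 * (Nat.card (P3T m₁) * Nat.card (P3T m₂)) := by
  have hm2 : m₂ % 4 = 1 ∨ m₂ % 4 = 2 := by omega
  have ha1 : Nat.card (patFib m₁ 1) = Nat.card (patFib m₁ 0) := (Nat.card_congr (e01 m₁)).symm
  have ha2 : Nat.card (patFib m₁ 2) = Nat.card (patFib m₁ 0) := by
    rw [← Nat.card_congr (e12 m₁ hm), ha1]
  have hb1 : Nat.card (patFib m₂ 1) = Nat.card (patFib m₂ 0) := (Nat.card_congr (e01 m₂)).symm
  have hb2 : Nat.card (patFib m₂ 2) = Nat.card (patFib m₂ 0) := by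
    rw [← Nat.card_congr (e12 m₂ hm2), hb1]
  have e1 : Nat.card (P3T m₁) = 3 * Nat.card (patFib m₁ 0) := by
    rw [card_P3T_eq_sum, Fin.sum_univ_three, ha1, ha2]; ring
  have e2 : Nat.card (P3T m₂) = 3 * Nat.card (patFib m₂ 0) := by
    rw [card_P3T_eq_sum, Fin.sum_univ_three, hb1, hb2]; ring
  have e3 : Nat.card (SameT m₁ m₂) = 3 * (Nat.card (patFib m₁ 0) * Nat.card (patFib m₂ 0)) := by
    rw [card_SameT_eq_sum m₁ m₂ h12, Fin.sum_univ_three, ha1, ha2, hb1, hb2]; ring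
  have e4 := card_split m₁ m₂
  rw [e1, e2] at *
  nlinarith [e3, e4]

end Pattern

section Content

lemma parity_transfer {c c' a b : ℤ} (hc : c % 2 = 1) (hc' : c' % 2 = 1) :
    ((2:ℤ) ∣ (c*a + c'*b)) ↔ (2:ℤ) ∣ (a+b) := by
  obtain ⟨s, hs⟩ : ∃ s, c = 2*s+1 := ⟨(c-1)/2, by omega⟩
  obtain ⟨t, ht⟩ : ∃ t, c' = 2*t+1 := ⟨(c'-1)/2, by omega⟩
  subst hs; subst ht
  constructor
  · rintro ⟨u, hu⟩; exact ⟨u - s*a - t*b, by linear_combination hu⟩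
  · rintro ⟨u, hu⟩; exact ⟨u + s*a + t*b, by linear_combination hu⟩

lemma gcdUnivMulLeft (c : ℕ) (v : Fin 3 → ℤ) :
    Finset.univ.gcd (fun i => (c:ℤ) * v i) = (c:ℤ) * Finset.univ.gcd v := by
  rw [Finset.gcd_mul_left]
  congr 1
  rw [← Int.abs_eq_normalize, abs_of_nonneg (by positivity : (0:ℤ) ≤ (c:ℤ))]

lemma card_PairT_eq_sum {n d₀ f : ℕ} (hn : n % 4 = 1 ∨ n % 4 = 2) (hnf : n = d₀ * f ^ 2)
    (hsf : Squarefree d₀) (hf : Odd f) :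
    Nat.card (PairT n) = ∑ c ∈ f.divisors,
      ∑ c' ∈ f.divisors.filter (fun c' => Nat.gcd c c' = 1),
        Nat.card (PPT (n / c ^ 2) (n / c' ^ 2)) := by
  classical
  have hn0 : n ≠ 0 := by omega
  have hf0 : f ≠ 0 := by rintro rfl; simp [Nat.odd_iff] at hf
  -- content facts
  have content : ∀ v : Fin 3 → ℤ, (v 0 ^ 2 + v 1 ^ 2 + v 2 ^ 2 = (n : ℤ)) →
      ((Finset.univ.gcd v).toNat ≠ 0 ∧ ((Finset.univ.gcd v).toNat : ℤ) = Finset.univ.gcd v ∧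
        (Finset.univ.gcd v).toNat ∣ f) := by
    intro v hv
    have hnn := gcd_univ_nonneg v
    have hne : Finset.univ.gcd v ≠ 0 := by
      intro h
      rw [Finset.gcd_eq_zero_iff] at h
      rw [h 0 (mem_univ 0), h 1 (mem_univ 1), h 2 (mem_univ 2)] at hv
      norm_num at hv
      exact hn0 (by exact_mod_cast hv.symm)
    have hcast : ((Finset.univ.gcd v).toNat : ℤ) = Finset.univ.gcd v := Int.toNat_of_nonneg hnn
    have hcne : (Finset.univ.gcd v).toNat ≠ 0 := by
      intro h
      apply hne
      omega
    refine ⟨hcne, hcast, ?_⟩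
    set c := (Finset.univ.gcd v).toNat
    have hdvd : ∀ i, ((c:ℤ)) ∣ v i := fun i => hcast ▸ Finset.gcd_dvd (mem_univ i)
    have hsq : ((c:ℤ))^2 ∣ (n:ℤ) := by
      rw [← hv]
      exact dvd_add (dvd_add (pow_dvd_pow_of_dvd (hdvd 0) 2) (pow_dvd_pow_of_dvd (hdvd 1) 2))
        (pow_dvd_pow_of_dvd (hdvd 2) 2)
    have hsqn : c ^ 2 ∣ n := by
      have : ((c^2 : ℕ) : ℤ) ∣ ((n:ℕ) : ℤ) := by push_cast; exact hsq
      exact_mod_cast this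
    exact dvd_of_sq_dvd hsf hf0 hcne (hnf ▸ hsqn)
  set gc : PairT n → ℕ × ℕ :=
    fun x => ((Finset.univ.gcd x.1.1).toNat, (Finset.univ.gcd x.1.2).toNat) with hgc
  set D := f.divisors ×ˢ f.divisors with hD
  have hmem : ∀ x : PairT n, gc x ∈ D := by
    intro x
    obtain ⟨h1, _, h3⟩ := content x.1.1 x.2.1
    obtain ⟨h1', _, h3'⟩ := content x.1.2 x.2.2.1
    exact Finset.mem_product.mpr ⟨Nat.mem_divisors.mpr ⟨h3, hf0⟩, Nat.mem_divisors.mpr ⟨h3', hf0⟩⟩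
  -- split the count along gc
  have step1 : Nat.card (PairT n) = ∑ b ∈ D, Nat.card {x : PairT n // gc x = b} := by
    rw [← Finset.sum_coe_sort D (fun b => Nat.card {x : PairT n // gc x = b})]
    rw [← nat_card_sigma (fun b : ↑D => {x : PairT n // gc x = (b : ℕ × ℕ)})]
    refine (Nat.card_eq_of_bijective
      (f := fun y : (Σ b : ↑D, {x : PairT n // gc x = (b : ℕ × ℕ)}) => y.2.1) ⟨?_, ?_⟩).symm
    · rintro ⟨b, x, hx⟩ ⟨b', x', hx'⟩ (h : x = x')
      subst h
      have hb : b = b' := Subtype.ext (hx.symm.trans hx')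
      subst hb
      have : (⟨x, hx⟩ : {x : PairT n // gc x = (b : ℕ × ℕ)}) = ⟨x, hx'⟩ := Subtype.ext rfl
      rw [this]
    · intro x
      exact ⟨⟨⟨gc x, hmem x⟩, x, rfl⟩, rfl⟩
  rw [step1, hD, Finset.sum_product]
  apply Finset.sum_congr rfl
  intro c hc
  rw [Finset.sum_filter]
  apply Finset.sum_congr rfl
  intro c' hc'
  -- now the fiber over (c, c')
  have hcd : c ∣ f := (Nat.mem_divisors.mp hc).1
  have hcd' : c' ∣ f := (Nat.mem_divisors.mp hc').1
  have hcodd : c % 2 = 1 := Nat.odd_iff.mp (hf.of_dvd_nat hcd)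
  have hcodd' : c' % 2 = 1 := Nat.odd_iff.mp (hf.of_dvd_nat hcd')
  have hc0 : c ≠ 0 := by omega
  have hc0' : c' ≠ 0 := by omega
  have hsqn : c ^ 2 ∣ n := hnf ▸ Dvd.dvd.mul_left (pow_dvd_pow_of_dvd hcd 2) d₀
  have hsqn' : c' ^ 2 ∣ n := hnf ▸ Dvd.dvd.mul_left (pow_dvd_pow_of_dvd hcd' 2) d₀
  by_cases hcc : Nat.gcd c c' = 1
  · rw [if_pos hcc]
    -- bijection between the fiber and PPT (n/c²) (n/c'²)
    have gfact : ∀ x : {x : PairT n // gc x = (c, c')},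
        Finset.univ.gcd x.1.1.1 = (c:ℤ) ∧ Finset.univ.gcd x.1.1.2 = (c':ℤ) := by
      intro x
      obtain ⟨_, hcast, _⟩ := content x.1.1.1 x.1.2.1
      obtain ⟨_, hcast', _⟩ := content x.1.1.2 x.1.2.2.1
      have h1 : (Finset.univ.gcd x.1.1.1).toNat = c := congrArg Prod.fst x.2
      have h2 : (Finset.univ.gcd x.1.1.2).toNat = c' := congrArg Prod.snd x.2
      refine ⟨hcast.symm.trans ?_, hcast'.symm.trans ?_⟩
      · exact congrArg (Nat.cast : ℕ → ℤ) h1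
      · exact congrArg (Nat.cast : ℕ → ℤ) h2
    apply Nat.card_eq_of_bijective
      (f := fun x : {x : PairT n // gc x = (c, c')} =>
        (⟨(fun i => x.1.1.1 i / (c:ℤ), fun i => x.1.1.2 i / (c':ℤ)), by
          -- membership in PPT
          obtain ⟨hgσ, hgτ⟩ := gfact x
          obtain ⟨⟨p, hn1, hn2, hg, hpar⟩, hx⟩ := x
          simp only at hgσ hgτ ⊢
          have hdσ : ∀ i, (c:ℤ) ∣ p.1 i := fun i => hgσ ▸ Finset.gcd_dvd (mem_univ i)
          have hdτ : ∀ i, (c':ℤ) ∣ p.2 i := fun i => hgτ ▸ Finset.gcd_dvd (mem_univ i)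
          have hrσ : ∀ i, p.1 i = (c:ℤ) * (p.1 i / (c:ℤ)) :=
            fun i => (Int.mul_ediv_cancel' (hdσ i)).symm
          have hrτ : ∀ i, p.2 i = (c':ℤ) * (p.2 i / (c':ℤ)) :=
            fun i => (Int.mul_ediv_cancel' (hdτ i)).symm
          have hcz : ((c:ℤ)) ≠ 0 := by exact_mod_cast hc0
          have hcz' : ((c':ℤ)) ≠ 0 := by exact_mod_cast hc0'
          have hnormσ : (p.1 0 / (c:ℤ))^2 + (p.1 1 / (c:ℤ))^2 + (p.1 2 / (c:ℤ))^2
              = ((n / c^2 : ℕ) : ℤ) := by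
            have hv : (c:ℤ)^2 * ((p.1 0 / (c:ℤ))^2 + (p.1 1 / (c:ℤ))^2 + (p.1 2 / (c:ℤ))^2)
                = (n:ℤ) := by
              rw [← hn1]
              conv_rhs => rw [hrσ 0, hrσ 1, hrσ 2]
              ring
            have hv2 : (c:ℤ)^2 * ((n / c^2 : ℕ) : ℤ) = (n:ℤ) := by
              rw [show ((c:ℤ))^2 = ((c^2 : ℕ) : ℤ) by push_cast; ring]
              rw [← Nat.cast_mul]
              congr 1
              exact Nat.mul_div_cancel' hsqn
            exact mul_left_cancel₀ (pow_ne_zero 2 hcz) (hv.trans hv2.symm)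
          have hnormτ : (p.2 0 / (c':ℤ))^2 + (p.2 1 / (c':ℤ))^2 + (p.2 2 / (c':ℤ))^2
              = ((n / c'^2 : ℕ) : ℤ) := by
            have hv : (c':ℤ)^2 * ((p.2 0 / (c':ℤ))^2 + (p.2 1 / (c':ℤ))^2 + (p.2 2 / (c':ℤ))^2)
                = (n:ℤ) := by
              rw [← hn2]
              conv_rhs => rw [hrτ 0, hrτ 1, hrτ 2]
              ring
            have hv2 : (c':ℤ)^2 * ((n / c'^2 : ℕ) : ℤ) = (n:ℤ) := by
              rw [show ((c':ℤ))^2 = ((c'^2 : ℕ) : ℤ) by push_cast; ring]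
              rw [← Nat.cast_mul]
              congr 1
              exact Nat.mul_div_cancel' hsqn'
            exact mul_left_cancel₀ (pow_ne_zero 2 hcz') (hv.trans hv2.symm)
          have hprimσ : Finset.univ.gcd (fun i => p.1 i / (c:ℤ)) = 1 := by
            have e : Finset.univ.gcd (fun i => (c:ℤ) * (p.1 i / (c:ℤ)))
                = (c:ℤ) * Finset.univ.gcd (fun i => p.1 i / (c:ℤ)) := gcdUnivMulLeft c _
            have e2 : (fun i => (c:ℤ) * (p.1 i / (c:ℤ))) = p.1 := by
              funext i; exact (hrσ i).symm
            rw [e2, hgσ] at e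
            exact (mul_left_cancel₀ hcz ((mul_one (c:ℤ)).trans e)).symm
          have hprimτ : Finset.univ.gcd (fun i => p.2 i / (c':ℤ)) = 1 := by
            have e : Finset.univ.gcd (fun i => (c':ℤ) * (p.2 i / (c':ℤ)))
                = (c':ℤ) * Finset.univ.gcd (fun i => p.2 i / (c':ℤ)) := gcdUnivMulLeft c' _
            have e2 : (fun i => (c':ℤ) * (p.2 i / (c':ℤ))) = p.2 := by
              funext i; exact (hrτ i).symm
            rw [e2, hgτ] at e
            exact (mul_left_cancel₀ hcz' ((mul_one (c':ℤ)).trans e)).symm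
          refine ⟨hnormσ, hnormτ, hprimσ, hprimτ, ?_⟩
          obtain ⟨i, hi⟩ := hpar
          refine ⟨i, fun h2 => hi ?_⟩
          have := (parity_transfer (c := (c:ℤ)) (c' := (c':ℤ)) (a := p.1 i / (c:ℤ))
            (b := p.2 i / (c':ℤ))
            (by exact_mod_cast hcodd) (by exact_mod_cast hcodd')).mpr h2
          rwa [← hrσ i, ← hrτ i] at this⟩ : PPT (n / c^2) (n / c'^2)))
    constructor
    · intro x y h
      have hσ : ∀ i, x.1.1.1 i / (c:ℤ) = y.1.1.1 i / (c:ℤ) := by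
        intro i
        exact congrFun (congrArg Prod.fst (congrArg Subtype.val h)) i
      have hτ : ∀ i, x.1.1.2 i / (c':ℤ) = y.1.1.2 i / (c':ℤ) := by
        intro i
        exact congrFun (congrArg Prod.snd (congrArg Subtype.val h)) i
      obtain ⟨hgσx, hgτx⟩ := gfact x
      obtain ⟨hgσy, hgτy⟩ := gfact y
      have hdσx : ∀ i, (c:ℤ) ∣ x.1.1.1 i := fun i => hgσx ▸ Finset.gcd_dvd (mem_univ i)
      have hdσy : ∀ i, (c:ℤ) ∣ y.1.1.1 i := fun i => hgσy ▸ Finset.gcd_dvd (mem_univ i)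
      have hdτx : ∀ i, (c':ℤ) ∣ x.1.1.2 i := fun i => hgτx ▸ Finset.gcd_dvd (mem_univ i)
      have hdτy : ∀ i, (c':ℤ) ∣ y.1.1.2 i := fun i => hgτy ▸ Finset.gcd_dvd (mem_univ i)
      apply Subtype.ext; apply Subtype.ext
      apply Prod.ext
      · funext i
        have := congrArg (fun z => (c:ℤ) * z) (hσ i)
        simpa [Int.mul_ediv_cancel' (hdσx i), Int.mul_ediv_cancel' (hdσy i)] using this
      · funext i
        have := congrArg (fun z => (c':ℤ) * z) (hτ i)
        simpa [Int.mul_ediv_cancel' (hdτx i), Int.mul_ediv_cancel' (hdτy i)] using this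
    · rintro ⟨q, hq1, hq2, hq3, hq4, hq5⟩
      have hcz : ((c:ℤ)) ≠ 0 := by exact_mod_cast hc0
      have hcz' : ((c':ℤ)) ≠ 0 := by exact_mod_cast hc0'
      have hnormσ : ((fun i => (c:ℤ) * q.1 i) 0)^2 + ((fun i => (c:ℤ) * q.1 i) 1)^2
          + ((fun i => (c:ℤ) * q.1 i) 2)^2 = (n:ℤ) := by
        simp only
        have : (c:ℤ)^2 * (q.1 0 ^2 + q.1 1 ^2 + q.1 2^2) = (n:ℤ) := by
          rw [hq1, show ((c:ℤ))^2 = ((c^2 : ℕ) : ℤ) by push_cast; ring, ← Nat.cast_mul,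
            Nat.mul_div_cancel' hsqn]
        linear_combination this
      have hnormτ : ((fun i => (c':ℤ) * q.2 i) 0)^2 + ((fun i => (c':ℤ) * q.2 i) 1)^2
          + ((fun i => (c':ℤ) * q.2 i) 2)^2 = (n:ℤ) := by
        simp only
        have : (c':ℤ)^2 * (q.2 0 ^2 + q.2 1 ^2 + q.2 2^2) = (n:ℤ) := by
          rw [hq2, show ((c':ℤ))^2 = ((c'^2 : ℕ) : ℤ) by push_cast; ring, ← Nat.cast_mul,
            Nat.mul_div_cancel' hsqn']
        linear_combination this
      have hgσ : Finset.univ.gcd (fun i => (c:ℤ) * q.1 i) = (c:ℤ) := by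
        rw [gcdUnivMulLeft c q.1, hq3, mul_one]
      have hgτ : Finset.univ.gcd (fun i => (c':ℤ) * q.2 i) = (c':ℤ) := by
        rw [gcdUnivMulLeft c' q.2, hq4, mul_one]
      have hgg : Int.gcd (Finset.univ.gcd (fun i => (c:ℤ) * q.1 i))
          (Finset.univ.gcd (fun i => (c':ℤ) * q.2 i)) = 1 := by
        rw [hgσ, hgτ, Int.gcd_natCast_natCast]
        exact hcc
      have hpar : ∃ i, ¬ (2:ℤ) ∣ ((fun i => (c:ℤ) * q.1 i) i + (fun i => (c':ℤ) * q.2 i) i) := by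
        obtain ⟨i, hi⟩ := hq5
        refine ⟨i, fun h2 => hi ?_⟩
        exact (parity_transfer (c := (c:ℤ)) (c' := (c':ℤ))
          (by exact_mod_cast hcodd) (by exact_mod_cast hcodd')).mp h2
      refine ⟨⟨⟨((fun i => (c:ℤ) * q.1 i), (fun i => (c':ℤ) * q.2 i)),
        hnormσ, hnormτ, hgg, hpar⟩, ?_⟩, ?_⟩
      · -- gc value is (c, c')
        show ((Finset.univ.gcd (fun i => (c:ℤ) * q.1 i)).toNat,
          (Finset.univ.gcd (fun i => (c':ℤ) * q.2 i)).toNat) = (c, c')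
        rw [hgσ, hgτ]
        simp
      · -- F of this equals the given q
        apply Subtype.ext
        apply Prod.ext
        · funext i
          show ((c:ℤ) * q.1 i) / (c:ℤ) = q.1 i
          exact Int.mul_ediv_cancel_left _ hcz
        · funext i
          show ((c':ℤ) * q.2 i) / (c':ℤ) = q.2 i
          exact Int.mul_ediv_cancel_left _ hcz'
  · rw [if_neg hcc]
    have : IsEmpty {x : PairT n // gc x = (c, c')} := by
      constructor
      rintro ⟨⟨p, hn1, hn2, hg, hpar⟩, hx⟩
      obtain ⟨_, hcast, _⟩ := content p.1 hn1
      obtain ⟨_, hcast', _⟩ := content p.2 hn2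
      have h1 : (Finset.univ.gcd p.1).toNat = c := congrArg Prod.fst hx
      have h2 : (Finset.univ.gcd p.2).toNat = c' := congrArg Prod.snd hx
      apply hcc
      rw [← h1, ← h2]
      rw [show Finset.univ.gcd p.1 = (((Finset.univ.gcd p.1).toNat : ℕ) : ℤ) from hcast.symm,
        show Finset.univ.gcd p.2 = (((Finset.univ.gcd p.2).toNat : ℕ) : ℤ) from hcast'.symm,
        Int.gcd_natCast_natCast] at hg
      exact hg
    exact Nat.card_of_isEmpty

lemma mod4_div {n c : ℕ} (hc : c % 2 = 1) (hdvd : c ^ 2 ∣ n) : (n / c ^ 2) % 4 = n % 4 := by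
  obtain ⟨m, rfl⟩ := hdvd
  have hc0 : c ≠ 0 := by omega
  rw [Nat.mul_div_cancel_left m (Nat.pos_of_ne_zero (pow_ne_zero 2 hc0))]
  have hc4 : c ^ 2 % 4 = 1 := by
    have h : c % 4 = 1 ∨ c % 4 = 3 := by omega
    rw [pow_two, Nat.mul_mod]
    rcases h with h | h <;> rw [h]
  conv_rhs => rw [Nat.mul_mod, hc4, one_mul]
  omega

end Content

lemma r24_eq (d : ℕ) : r24 d = (Nat.card (WT d) : ℚ) / 2 := rfl
lemma r3prim_eq (m : ℕ) : r3prim m = Nat.card (P3T m) := rfl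

/-- for `d ≡ 0 (mod 4)`: if `d/4 ≡ 1, 2 (mod 4)` and
`d/4 = d₀f²` with `d₀` squarefree and `f` odd, then
`r₂₄(d) = (1/3)·Σ_{c ∣ f} Σ_{c′ ∣ f, gcd(c,c′)=1} r₃,prim(d/(4c²))·r₃,prim(d/(4c′²))`;
moreover if `d/4 ≡ 0, 3 (mod 4)` then `r₂₄(d) = 0`. -/
theorem r24_eq_of_zero_mod_four (d : ℕ) (hd : 0 < d) (h4 : d % 4 = 0) :
    (∀ d₀ f : ℕ, (d / 4 % 4 = 1 ∨ d / 4 % 4 = 2) → d / 4 = d₀ * f ^ 2 →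
      Squarefree d₀ → Odd f →
      r24 d = (1 / 3 : ℚ) *
        ∑ c ∈ f.divisors, ∑ c' ∈ f.divisors.filter (fun c' => Nat.gcd c c' = 1),
          (r3prim (d / (4 * c ^ 2)) : ℚ) * (r3prim (d / (4 * c' ^ 2)) : ℚ)) ∧
    ((d / 4 % 4 = 0 ∨ d / 4 % 4 = 3) → r24 d = 0) := by
  constructor
  · intro d₀ f hn hnf hsf hf
    set n := d / 4 with hndef
    have hf0 : f ≠ 0 := by rintro rfl; simp [Nat.odd_iff] at hf
    have hrw : ∀ c : ℕ, d / (4 * c ^ 2) = n / c ^ 2 := by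
      intro c; rw [hndef, Nat.div_div_eq_div_mul]
    rw [r24_eq, card_WT_eq d h4, ← hndef, card_PairT_eq_sum hn hnf hsf hf]
    have key : ∀ c ∈ f.divisors, ∀ c' ∈ f.divisors.filter (fun c' => Nat.gcd c c' = 1),
        (Nat.card (PPT (n / c ^ 2) (n / c' ^ 2)) : ℚ)
          = 2/3 * ((r3prim (n / c ^ 2) : ℚ) * (r3prim (n / c' ^ 2) : ℚ)) := by
      intro c hc c' hc'
      rw [Finset.mem_filter] at hc'
      have hcd : c ∣ f := (Nat.mem_divisors.mp hc).1
      have hcd' : c' ∣ f := (Nat.mem_divisors.mp hc'.1).1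
      have hcodd : c % 2 = 1 := Nat.odd_iff.mp (hf.of_dvd_nat hcd)
      have hcodd' : c' % 2 = 1 := Nat.odd_iff.mp (hf.of_dvd_nat hcd')
      have hsq : c ^ 2 ∣ n := hnf ▸ Dvd.dvd.mul_left (pow_dvd_pow_of_dvd hcd 2) d₀
      have hsq' : c' ^ 2 ∣ n := hnf ▸ Dvd.dvd.mul_left (pow_dvd_pow_of_dvd hcd' 2) d₀
      have hm1 := mod4_div hcodd hsq
      have hm2 := mod4_div hcodd' hsq'
      have h3 := three_mul_card_PPT (n / c ^ 2) (n / c' ^ 2) (by omega) (by omega)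
      rw [r3prim_eq, r3prim_eq]
      have h3' : (3 : ℚ) * (Nat.card (PPT (n / c ^ 2) (n / c' ^ 2)) : ℚ)
          = 2 * ((Nat.card (P3T (n / c ^ 2)) : ℚ) * (Nat.card (P3T (n / c' ^ 2)) : ℚ)) := by
        exact_mod_cast congrArg (Nat.cast : ℕ → ℚ) h3
      linarith
    calc ((∑ c ∈ f.divisors, ∑ c' ∈ f.divisors.filter (fun c' => Nat.gcd c c' = 1),
          Nat.card (PPT (n / c ^ 2) (n / c' ^ 2)) : ℕ) : ℚ) / 2
        = (∑ c ∈ f.divisors, ∑ c' ∈ f.divisors.filter (fun c' => Nat.gcd c c' = 1),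
            (Nat.card (PPT (n / c ^ 2) (n / c' ^ 2)) : ℚ)) / 2 := by push_cast; ring
      _ = (∑ c ∈ f.divisors, ∑ c' ∈ f.divisors.filter (fun c' => Nat.gcd c c' = 1),
            2/3 * ((r3prim (n / c ^ 2) : ℚ) * (r3prim (n / c' ^ 2) : ℚ))) / 2 := by
          rw [Finset.sum_congr rfl (fun c hc => Finset.sum_congr rfl (fun c' hc' => key c hc c' hc'))]
      _ = (1 / 3 : ℚ) * ∑ c ∈ f.divisors, ∑ c' ∈ f.divisors.filter (fun c' => Nat.gcd c c' = 1),
            (r3prim (d / (4 * c ^ 2)) : ℚ) * (r3prim (d / (4 * c' ^ 2)) : ℚ) := by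
          simp_rw [hrw, ← Finset.mul_sum]
          ring
  · intro hn
    have hempty : IsEmpty (PairT (d / 4)) := by
      constructor
      rintro ⟨p, hn1, hn2, hg, hpar⟩
      rcases hn with h0 | h3
      · obtain ⟨a0, a1, a2⟩ := even_of_norm0 h0 hn1
        obtain ⟨b0, b1, b2⟩ := even_of_norm0 h0 hn2
        have d1 : (2:ℤ) ∣ Finset.univ.gcd p.1 := by
          apply Finset.dvd_gcd; intro j _
          fin_cases j
          · show (2:ℤ) ∣ p.1 0; omega
          · show (2:ℤ) ∣ p.1 1; omega
          · show (2:ℤ) ∣ p.1 2; omega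
        have d2 : (2:ℤ) ∣ Finset.univ.gcd p.2 := by
          apply Finset.dvd_gcd; intro j _
          fin_cases j
          · show (2:ℤ) ∣ p.2 0; omega
          · show (2:ℤ) ∣ p.2 1; omega
          · show (2:ℤ) ∣ p.2 2; omega
        have := Int.dvd_gcd d1 d2
        rw [hg] at this
        norm_num at this
      · obtain ⟨a0, a1, a2⟩ := odd_of_norm3 h3 hn1
        obtain ⟨b0, b1, b2⟩ := odd_of_norm3 h3 hn2
        obtain ⟨i, hi⟩ := hpar
        apply hi
        fin_cases i
        · show (2:ℤ) ∣ p.1 0 + p.2 0; omega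
        · show (2:ℤ) ∣ p.1 1 + p.2 1; omega
        · show (2:ℤ) ∣ p.1 2 + p.2 2; omega
    rw [r24_eq, card_WT_eq d h4, Nat.card_of_isEmpty]
    norm_num
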